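/- arXiv:1511.09262 — 2 statements merged into one kernel-verified Lean document; each statement's English description precedes it below -/
import Mathlib

section
/- Let G be a graph with at least two vertices, let v be a vertex of G, and let G' be the graph obtained from G by adding a new vertex v' and the edge vv'. For a set S' of vertices of G': S' is a type I set for v' in G' with L_{S'}(v') = 0 if and only if S' = S ∪ {v'} for some set S ⊆ V(G) that is a type I set for v in G with L_S(v) ∈ {−2, −1, 1}. -/
/-- A set of vertices is independent: no two of its vertices are adjacent. -/
def IndepSet {V : Type*} (G : SimpleGraph V) (S : Set V) : Prop :=
  ∀ u ∈ S, ∀ w ∈ S, ¬ G.Adj u w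

/-- `S` is a type I set for `v` in `G`: `S` is independent, every vertex
`u ∉ S ∪ {v}` has at least one and at most two neighbors in `S`, and `v` either
belongs to `S` or has at most two neighbors in `S`. -/
def TypeISet {V : Type*} (G : SimpleGraph V) (v : V) (S : Set V) : Prop :=
  IndepSet G S ∧
    (∀ u, u ∉ S → u ≠ v →
      1 ≤ (S ∩ G.neighborSet u).ncard ∧ (S ∩ G.neighborSet u).ncard ≤ 2) ∧
    (v ∈ S ∨ (S ∩ G.neighborSet v).ncard ≤ 2)

/-- The labeling `L_S(v) = l` : `0` if `v ∈ S`; `k ≥ 1` if `v ∉ S` and `v` has exactly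
`k` neighbors in `S`; `-1` if `N[v] ∩ S = ∅` and every neighbor of `v` has exactly one
neighbor in `S`; `-2` if `N[v] ∩ S = ∅` and some neighbor of `v` has exactly two
neighbors in `S`. -/
def HasLabel {V : Type*} (G : SimpleGraph V) (v : V) (S : Set V) (l : ℤ) : Prop :=
  (v ∈ S ∧ l = 0) ∨
  (v ∉ S ∧ ∃ k : ℕ, 1 ≤ k ∧ (S ∩ G.neighborSet v).ncard = k ∧ l = (k : ℤ)) ∨
  (v ∉ S ∧ S ∩ G.neighborSet v = ∅ ∧
    (∀ u ∈ G.neighborSet v, (S ∩ G.neighborSet u).ncard = 1) ∧ l = -1) ∨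
  (v ∉ S ∧ S ∩ G.neighborSet v = ∅ ∧
    (∃ u ∈ G.neighborSet v, (S ∩ G.neighborSet u).ncard = 2) ∧ l = -2)

/-- The star `K_{1,r}` with center `none` and the `r` leaves `some i`. -/
def starGraph (r : ℕ) : SimpleGraph (Option (Fin r)) where
  Adj a b := (a = none ∧ b ≠ none) ∨ (a ≠ none ∧ b = none)
  symm := by constructor; intro a b h; tauto
  loopless := by constructor; intro a h; tauto

/-- The graph obtained from `G` by adding a new vertex `none` adjacent only to `v`. -/
def addLeaf {V : Type*} (G : SimpleGraph V) (v : V) : SimpleGraph (Option V) where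
  Adj a b := match a, b with
    | some x, some y => G.Adj x y
    | none, some y => y = v
    | some x, none => x = v
    | none, none => False
  symm := by
    constructor
    intro a b h
    match a, b with
    | some x, some y => exact h.symm
    | none, some y => exact h
    | some x, none => exact h
    | none, none => exact h
  loopless := by
    constructor
    intro a h
    match a with
    | some x => exact G.loopless.irrefl x h
    | none => exact h

/-- The graph obtained from the disjoint union of `G` and `H` by adding the edge
between `v` (in `G`) and `v'` (in `H`). -/
def joinAt {V W : Type*} (G : SimpleGraph V) (H : SimpleGraph W) (v : V) (v' : W) :
    SimpleGraph (V ⊕ W) where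
  Adj a b := match a, b with
    | Sum.inl x, Sum.inl y => G.Adj x y
    | Sum.inr x, Sum.inr y => H.Adj x y
    | Sum.inl x, Sum.inr y => x = v ∧ y = v'
    | Sum.inr x, Sum.inl y => x = v' ∧ y = v
  symm := by
    constructor
    intro a b h
    match a, b with
    | Sum.inl x, Sum.inl y => exact h.symm
    | Sum.inr x, Sum.inr y => exact h.symm
    | Sum.inl x, Sum.inr y => exact ⟨h.2, h.1⟩
    | Sum.inr x, Sum.inl y => exact ⟨h.2, h.1⟩
  loopless := by
    constructor
    intro a h
    match a with
    | Sum.inl x => exact G.loopless.irrefl x h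
    | Sum.inr x => exact H.loopless.irrefl x h

/-!
Putting the new leaf `v'` into `S'` forces `v ∉ S` and raises the number of neighbours of `v`
in the set by one, while the counts at all other old vertices are unchanged. Hence `S'` is of
type I for `v'` exactly when `S` is of type I for `v` with `v ∉ S` and at most one neighbour of
`v` in `S`; for a type I set these two conditions say precisely that `L_S(v) ∈ {−2, −1, 1}`,
the value `−2` arising when `v` has no neighbour in `S` but some neighbour of `v` has two.
-/

/-- `ncard` is `0` on infinite sets, so the lower bound forces finiteness. -/
lemma Set.one_le_ncard_and_ncard_le_two_iff {α : Type*} (s : Set α) :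
    1 ≤ s.ncard ∧ s.ncard ≤ 2 ↔ 1 ≤ s.encard ∧ s.encard ≤ 2 := by
  by_cases hs : s.Finite
  · rw [← hs.cast_ncard_eq]
    norm_cast
  · simp [Set.Infinite.ncard hs, Set.Infinite.encard_eq hs]

section Label

variable {V : Type*} {G : SimpleGraph V} {v : V} {S : Set V}

lemma hasLabel_zero_iff : HasLabel G v S 0 ↔ v ∈ S := by
  refine ⟨?_, fun h => .inl ⟨h, rfl⟩⟩
  rintro (⟨h, -⟩ | ⟨-, k, hk, -, h⟩ | ⟨-, -, -, h⟩ | ⟨-, -, -, h⟩) <;> first | exact h | omega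

lemma hasLabel_one_iff : HasLabel G v S 1 ↔ v ∉ S ∧ (S ∩ G.neighborSet v).ncard = 1 := by
  refine ⟨?_, fun ⟨hv, h⟩ => .inr (.inl ⟨hv, 1, le_rfl, h, rfl⟩)⟩
  rintro (⟨-, h⟩ | ⟨hv, k, -, hk, h⟩ | ⟨-, -, -, h⟩ | ⟨-, -, -, h⟩) <;> try omega
  exact ⟨hv, by omega⟩

lemma hasLabel_neg_one_iff : HasLabel G v S (-1) ↔ v ∉ S ∧ S ∩ G.neighborSet v = ∅ ∧
    ∀ u ∈ G.neighborSet v, (S ∩ G.neighborSet u).ncard = 1 := by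
  refine ⟨?_, fun ⟨hv, he, h⟩ => .inr (.inr (.inl ⟨hv, he, h, rfl⟩))⟩
  rintro (⟨-, h⟩ | ⟨-, k, -, -, h⟩ | ⟨hv, he, hall, -⟩ | ⟨-, -, -, h⟩) <;> try omega
  exact ⟨hv, he, hall⟩

lemma hasLabel_neg_two_iff : HasLabel G v S (-2) ↔ v ∉ S ∧ S ∩ G.neighborSet v = ∅ ∧
    ∃ u ∈ G.neighborSet v, (S ∩ G.neighborSet u).ncard = 2 := by
  refine ⟨?_, fun ⟨hv, he, h⟩ => .inr (.inr (.inr ⟨hv, he, h, rfl⟩))⟩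
  rintro (⟨-, h⟩ | ⟨-, k, -, -, h⟩ | ⟨-, -, -, h⟩ | ⟨hv, he, hex, -⟩) <;> try omega
  exact ⟨hv, he, hex⟩

lemma hasLabel_neg_two_or_neg_one_or_one_iff (hS : TypeISet G v S) :
    (HasLabel G v S (-2) ∨ HasLabel G v S (-1) ∨ HasLabel G v S 1) ↔
      v ∉ S ∧ (S ∩ G.neighborSet v).encard ≤ 1 := by
  rw [hasLabel_neg_two_iff, hasLabel_neg_one_iff, hasLabel_one_iff, Set.encard_le_one_iff_eq,
    Set.ncard_eq_one]
  constructor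
  · rintro (⟨hv, he, -⟩ | ⟨hv, he, -⟩ | ⟨hv, hx⟩)
    exacts [⟨hv, .inl he⟩, ⟨hv, .inl he⟩, ⟨hv, .inr hx⟩]
  rintro ⟨hv, he | hx⟩
  · by_cases hall : ∀ u ∈ G.neighborSet v, (S ∩ G.neighborSet u).ncard = 1
    · exact .inr (.inl ⟨hv, he, hall⟩)
    push Not at hall
    obtain ⟨u, hu, hne⟩ := hall
    have huS : u ∉ S := fun h => (Set.eq_empty_iff_forall_notMem.1 he) u ⟨h, hu⟩
    have := hS.2.1 u huS (G.ne_of_adj hu).symm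
    exact .inl ⟨hv, he, u, hu, by omega⟩
  · exact .inr (.inr ⟨hv, hx⟩)

end Label

section AddLeaf

variable {V : Type*} (G : SimpleGraph V) (v : V)

@[simp] lemma addLeaf_adj_some_some (x y : V) :
    (addLeaf G v).Adj (some x) (some y) ↔ G.Adj x y := Iff.rfl

@[simp] lemma addLeaf_adj_some_none (x : V) : (addLeaf G v).Adj (some x) none ↔ x = v :=
  Iff.rfl

@[simp] lemma addLeaf_adj_none_some (y : V) : (addLeaf G v).Adj none (some y) ↔ y = v :=
  Iff.rfl

@[simp] lemma addLeaf_adj_none_none : (addLeaf G v).Adj none none ↔ False := Iff.rfl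

lemma indepSet_addLeaf_iff (S : Set V) :
    IndepSet (addLeaf G v) (some '' S ∪ {none}) ↔ IndepSet G S ∧ v ∉ S := by
  simp only [IndepSet, Option.forall, Set.mem_union, Set.mem_image, Set.mem_singleton_iff,
    Option.some_inj, exists_eq_right, reduceCtorEq, addLeaf_adj_some_some,
    addLeaf_adj_some_none, addLeaf_adj_none_some, addLeaf_adj_none_none]
  grind

variable {G v}

lemma ncard_inter_addLeaf_neighborSet_of_ne {u : V} (h : u ≠ v) (S : Set V) :
    ((some '' S ∪ {none}) ∩ (addLeaf G v).neighborSet (some u)).ncard =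
      (S ∩ G.neighborSet u).ncard := by
  have : (some '' S ∪ {none}) ∩ (addLeaf G v).neighborSet (some u) =
      some '' (S ∩ G.neighborSet u) := by
    ext (_ | y) <;> simp [h]
  rw [this, Set.ncard_image_of_injective _ (Option.some_injective V)]

lemma one_le_ncard_inter_addLeaf_neighborSet_self_le_two_iff (S : Set V) :
    (1 ≤ ((some '' S ∪ {none}) ∩ (addLeaf G v).neighborSet (some v)).ncard ∧
      ((some '' S ∪ {none}) ∩ (addLeaf G v).neighborSet (some v)).ncard ≤ 2) ↔
      (S ∩ G.neighborSet v).encard ≤ 1 := by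
  have hinter : (some '' S ∪ {none}) ∩ (addLeaf G v).neighborSet (some v) =
      insert none (some '' (S ∩ G.neighborSet v)) := by
    ext (_ | y) <;> simp
  rw [Set.one_le_ncard_and_ncard_le_two_iff, hinter, Set.encard_insert_of_notMem (by simp),
    (Option.some_injective V).encard_image, show (2 : ℕ∞) = 1 + 1 from rfl,
    ENat.add_le_add_iff_right ENat.one_ne_top]
  simp

lemma typeISet_addLeaf_none_iff (S : Set V) :
    TypeISet (addLeaf G v) none (some '' S ∪ {none}) ↔
      TypeISet G v S ∧ v ∉ S ∧ (S ∩ G.neighborSet v).encard ≤ 1 := by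
  rw [TypeISet, TypeISet, indepSet_addLeaf_iff]
  constructor
  · rintro ⟨⟨hind, hvS⟩, hdeg, -⟩
    have hv : (S ∩ G.neighborSet v).encard ≤ 1 := by
      rw [← one_le_ncard_inter_addLeaf_neighborSet_self_le_two_iff]
      exact hdeg (some v) (by simpa) (by simp)
    refine ⟨⟨hind, fun u hu huv => ?_, .inr ?_⟩, hvS, hv⟩
    · rw [← ncard_inter_addLeaf_neighborSet_of_ne huv]
      exact hdeg (some u) (by simpa) (by simp)
    · have := (Set.encard_le_coe_iff_finite_ncard_le (k := 1)).1 (by simpa using hv)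
      omega
  · rintro ⟨⟨hind, hdeg, -⟩, hvS, hv⟩
    refine ⟨⟨hind, hvS⟩, ?_, .inl (by simp)⟩
    rintro (_ | u) hu -
    · simp at hu
    by_cases huv : u = v
    · subst huv
      exact (one_le_ncard_inter_addLeaf_neighborSet_self_le_two_iff S).2 hv
    · rw [ncard_inter_addLeaf_neighborSet_of_ne huv]
      exact hdeg u (by simpa using hu) huv

end AddLeaf

theorem statement13_general {V : Type*} (G : SimpleGraph V)
    (v : V) (S' : Set (Option V)) :
    (TypeISet (addLeaf G v) none S' ∧ HasLabel (addLeaf G v) none S' 0) ↔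
      ∃ S : Set V, S' = some '' S ∪ {none} ∧ TypeISet G v S ∧
        (HasLabel G v S (-2) ∨ HasLabel G v S (-1) ∨ HasLabel G v S 1) := by
  constructor
  · rintro ⟨hS', hlabel⟩
    have hS'eq : S' = some '' (some ⁻¹' S') ∪ {none} := by
      ext (_ | y)
      · simpa using hasLabel_zero_iff.1 hlabel
      · simp
    rw [hS'eq, typeISet_addLeaf_none_iff] at hS'
    obtain ⟨hS, hcount⟩ := hS'
    exact ⟨_, hS'eq, hS, (hasLabel_neg_two_or_neg_one_or_one_iff hS).2 hcount⟩
  · rintro ⟨S, rfl, hS, hlabel⟩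
    refine ⟨(typeISet_addLeaf_none_iff S).2 ⟨hS, ?_⟩, hasLabel_zero_iff.2 (by simp)⟩
    exact (hasLabel_neg_two_or_neg_one_or_one_iff hS).1 hlabel

theorem statement13 {V : Type*} [Fintype V] [Nontrivial V] (G : SimpleGraph V)
    (v : V) (S' : Set (Option V)) :
    (TypeISet (addLeaf G v) none S' ∧ HasLabel (addLeaf G v) none S' 0) ↔
      ∃ S : Set V, S' = some '' S ∪ {none} ∧ TypeISet G v S ∧
        (HasLabel G v S (-2) ∨ HasLabel G v S (-1) ∨ HasLabel G v S 1) :=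
  statement13_general G v S'
end

section
/- Let G and G' be two vertex-disjoint graphs, each with at least two vertices, let v be a vertex of G and v' a vertex of G', and let G'' be the graph obtained from the disjoint union of G and G' by adding the edge vv'. Then: (i) a set S'' of vertices of G'' is a type I set for v' in G'' with L_{S''}(v') = 2 if and only if S'' = S ∪ S' where S = S'' ∩ V(G) is a type I set for v in G, S' = S'' ∩ V(G') is a type I set for v' in G', and the pair (L_S(v), L_{S'}(v')) belongs to {(0,1), (1,2), (2,2)}; (ii) moreover, if R ⊆ V(G) is a type I set for v in G with L_R(v) = −1 and S' ⊆ V(G') is a type I set for v' in G' with L_{S'}(v') = 1, then S'' = (R ∪ {v}) ∪ S' is a type I set for v' in G'' with L_{S''}(v') = 2. -/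
/-! Away from `v` and `v'` every vertex of `joinAt G G' v v'` has the same neighbours as in its own
graph, so for a set `S''` avoiding `v'` the type I conditions split into those for its halves `S`
and `S'` (with `v` still dominated when it lies outside `S`), except at `v'`, which gains the
neighbour `v`: its count is `|S' ∩ N(v')| + [v ∈ S]`. Hence the label `2` at `v'` arises either as
`1 + 1` (`v ∈ S`) or as `2 + 0`, and then `L_S(v) ∈ {1, 2}`. For (ii), `L_R(v) = -1` means that
every neighbour of `v` has exactly one neighbour in `R`, so `R ∪ {v}` is again type I for `v`, with
label `0`. -/

lemma ncard_inter_insert {α : Type*} [Finite α] (s t : Set α) {a : α} [Decidable (a ∈ s)]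
    (ha : a ∉ t) :
    (s ∩ insert a t).ncard = (s ∩ t).ncard + if a ∈ s then 1 else 0 := by
  split_ifs with has
  · rw [Set.inter_insert_of_mem has, Set.ncard_insert_of_notMem fun h => ha h.2]
  · rw [Set.inter_insert_of_notMem has, add_zero]

section Label

variable {V : Type*} {G : SimpleGraph V} {v : V} {S : Set V}

lemma hasLabel_natCast_iff {k : ℕ} (hk : 1 ≤ k) :
    HasLabel G v S k ↔ v ∉ S ∧ (S ∩ G.neighborSet v).ncard = k := by
  refine ⟨?_, fun ⟨hv, hc⟩ => Or.inr (Or.inl ⟨hv, k, hk, hc, rfl⟩)⟩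
  rintro (⟨-, he⟩ | ⟨hv, k', -, hc, he⟩ | ⟨-, -, -, he⟩ | ⟨-, -, -, he⟩)
  · omega
  · exact ⟨hv, hc.trans (by exact_mod_cast he.symm)⟩
  all_goals omega

lemma hasLabel_two_iff : HasLabel G v S 2 ↔ v ∉ S ∧ (S ∩ G.neighborSet v).ncard = 2 :=
  mod_cast hasLabel_natCast_iff one_le_two

lemma TypeISet.union_singleton_of_hasLabel_neg_one [Finite V] (hS : TypeISet G v S)
    (hl : HasLabel G v S (-1)) : TypeISet G v (S ∪ {v}) := by
  obtain ⟨hvS, hSv, hnbr⟩ := hasLabel_neg_one_iff.1 hl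
  obtain ⟨hind, hdom, -⟩ := hS
  have hnadj : ∀ w ∈ S, ¬ G.Adj v w := fun w hw hadj =>
    (Set.eq_empty_iff_forall_notMem.1 hSv w) ⟨hw, hadj⟩
  rw [Set.union_singleton]
  refine ⟨?_, fun u hu hne => ?_, Or.inl (Set.mem_insert v S)⟩
  · rintro u (rfl | hu) w (rfl | hw) hadj
    · exact hadj.ne rfl
    · exact hnadj w hw hadj
    · exact hnadj u hu hadj.symm
    · exact hind u hu w hw hadj
  · have huS : u ∉ S := fun h => hu (Set.mem_insert_of_mem v h)
    by_cases hadj : G.Adj u v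
    · rw [Set.insert_inter_of_mem (t := G.neighborSet u) hadj,
        Set.ncard_insert_of_notMem fun h => hvS h.1,
        hnbr u hadj.symm]
      omega
    · rw [Set.insert_inter_of_notMem (t := G.neighborSet u) hadj]
      exact hdom u huS hne

end Label

section JoinAt

variable {V W : Type*} (G : SimpleGraph V) (G' : SimpleGraph W) (v : V) (v' : W)

lemma joinAt_neighborSet_inl_of_ne {u : V} (hu : u ≠ v) :
    (joinAt G G' v v').neighborSet (Sum.inl u) = Sum.inl '' G.neighborSet u := by
  ext (x | x) <;> simp [joinAt, hu]

lemma joinAt_neighborSet_inl_self :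
    (joinAt G G' v v').neighborSet (Sum.inl v) =
      insert (Sum.inr v') (Sum.inl '' G.neighborSet v) := by
  ext (x | x) <;> simp [joinAt]

lemma joinAt_neighborSet_inr_of_ne {u : W} (hu : u ≠ v') :
    (joinAt G G' v v').neighborSet (Sum.inr u) = Sum.inr '' G'.neighborSet u := by
  ext (x | x) <;> simp [joinAt, hu]

lemma joinAt_neighborSet_inr_self :
    (joinAt G G' v v').neighborSet (Sum.inr v') =
      insert (Sum.inl v) (Sum.inr '' G'.neighborSet v') := by
  ext (x | x) <;> simp [joinAt]

variable {G G' v v'} {S : Set V} {S' : Set W}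

lemma union_image_inter_image_inl (A : Set V) :
    (Sum.inl '' S ∪ Sum.inr '' S') ∩ Sum.inl '' A = Sum.inl '' (S ∩ A) := by
  ext (x | x) <;> simp

lemma union_image_inter_image_inr (A : Set W) :
    (Sum.inl '' S ∪ Sum.inr '' S') ∩ Sum.inr '' A = Sum.inr '' (S' ∩ A) := by
  ext (x | x) <;> simp

lemma indepSet_joinAt_iff (hv' : v' ∉ S') :
    IndepSet (joinAt G G' v v') (Sum.inl '' S ∪ Sum.inr '' S') ↔
      IndepSet G S ∧ IndepSet G' S' := by
  refine ⟨fun h => ⟨fun x hx y hy => h (.inl x) (by simpa) (.inl y) (by simpa),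
    fun x hx y hy => h (.inr x) (by simpa) (.inr y) (by simpa)⟩, ?_⟩
  rintro ⟨hS, hS'⟩ (x | x) hx (y | y) hy hadj <;> simp only [Set.mem_union, Set.mem_image,
    Sum.inl.injEq, Sum.inr.injEq, exists_eq_right, reduceCtorEq, and_false, exists_false,
    or_false, false_or] at hx hy
  · exact hS x hx y hy hadj
  · exact hv' (hadj.2 ▸ hy)
  · exact hv' (hadj.1 ▸ hx)
  · exact hS' x hx y hy hadj

lemma ncard_inter_joinAt_neighborSet_inl (hv' : v' ∉ S') (u : V) :
    ((Sum.inl '' S ∪ Sum.inr '' S') ∩ (joinAt G G' v v').neighborSet (Sum.inl u)).ncard =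
      (S ∩ G.neighborSet u).ncard := by
  have hinter : (Sum.inl '' S ∪ Sum.inr '' S') ∩ (joinAt G G' v v').neighborSet (Sum.inl u) =
      Sum.inl '' (S ∩ G.neighborSet u) := by
    rcases eq_or_ne u v with rfl | hu
    · rw [joinAt_neighborSet_inl_self, Set.inter_insert_of_notMem (by simpa),
        union_image_inter_image_inl]
    · rw [joinAt_neighborSet_inl_of_ne _ _ _ _ hu, union_image_inter_image_inl]
  rw [hinter, Set.ncard_image_of_injective _ Sum.inl_injective]

lemma ncard_inter_joinAt_neighborSet_inr_of_ne {u : W} (hu : u ≠ v') :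
    ((Sum.inl '' S ∪ Sum.inr '' S') ∩ (joinAt G G' v v').neighborSet (Sum.inr u)).ncard =
      (S' ∩ G'.neighborSet u).ncard := by
  rw [joinAt_neighborSet_inr_of_ne _ _ _ _ hu, union_image_inter_image_inr,
    Set.ncard_image_of_injective _ Sum.inr_injective]

open Classical in
lemma ncard_inter_joinAt_neighborSet_inr_self [Finite V] [Finite W] :
    ((Sum.inl '' S ∪ Sum.inr '' S') ∩ (joinAt G G' v v').neighborSet (Sum.inr v')).ncard =
      (S' ∩ G'.neighborSet v').ncard + if v ∈ S then 1 else 0 := by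
  rw [joinAt_neighborSet_inr_self, ncard_inter_insert _ _ (by simp), union_image_inter_image_inr,
    Set.ncard_image_of_injective _ Sum.inr_injective]
  simp

end JoinAt

section JoinAtTypeI

variable {V W : Type*} [Finite V] [Finite W] {G : SimpleGraph V} {G' : SimpleGraph W} {v : V}
  {v' : W} {S : Set V} {S' : Set W}

open Classical in
lemma typeISet_joinAt_iff (hv' : v' ∉ S') :
    TypeISet (joinAt G G' v v') (Sum.inr v') (Sum.inl '' S ∪ Sum.inr '' S') ↔
      TypeISet G v S ∧ (v ∉ S → 1 ≤ (S ∩ G.neighborSet v).ncard) ∧ TypeISet G' v' S' ∧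
        (S' ∩ G'.neighborSet v').ncard + (if v ∈ S then 1 else 0) ≤ 2 := by
  rw [TypeISet, indepSet_joinAt_iff hv', ncard_inter_joinAt_neighborSet_inr_self]
  constructor
  · rintro ⟨⟨hS, hS'⟩, hdom, hcount⟩
    have hdomS : ∀ u ∉ S,
        1 ≤ (S ∩ G.neighborSet u).ncard ∧ (S ∩ G.neighborSet u).ncard ≤ 2 :=
      fun u hu => by
        simpa [ncard_inter_joinAt_neighborSet_inl hv'] using hdom (.inl u) (by simpa) (by simp)
    have hdomS' : ∀ u ∉ S', u ≠ v' →
        1 ≤ (S' ∩ G'.neighborSet u).ncard ∧ (S' ∩ G'.neighborSet u).ncard ≤ 2 :=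
      fun u hu hne => by
        simpa [ncard_inter_joinAt_neighborSet_inr_of_ne hne] using
          hdom (.inr u) (by simpa) (by simpa)
    replace hcount : (S' ∩ G'.neighborSet v').ncard + (if v ∈ S then 1 else 0) ≤ 2 := by
      simpa [hv'] using hcount
    refine ⟨⟨hS, fun u hu _ => hdomS u hu, or_iff_not_imp_left.2 fun hv => (hdomS v hv).2⟩,
      fun hv => (hdomS v hv).1, ⟨hS', hdomS', Or.inr (by omega)⟩, hcount⟩
  · rintro ⟨⟨hS, hdomS, hvS⟩, hvpos, ⟨hS', hdomS', -⟩, hcount⟩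
    refine ⟨⟨hS, hS'⟩, ?_, Or.inr hcount⟩
    rintro (u | u) hu hne
    · replace hu : u ∉ S := by simpa using hu
      rw [ncard_inter_joinAt_neighborSet_inl hv']
      rcases eq_or_ne u v with rfl | huv
      · exact ⟨hvpos hu, hvS.resolve_left hu⟩
      · exact hdomS u hu huv
    · replace hne : u ≠ v' := by simpa using hne
      rw [ncard_inter_joinAt_neighborSet_inr_of_ne hne]
      exact hdomS' u (by simpa using hu) hne

open Classical in
lemma hasLabel_joinAt_two_iff :
    HasLabel (joinAt G G' v v') (Sum.inr v') (Sum.inl '' S ∪ Sum.inr '' S') 2 ↔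
      v' ∉ S' ∧ (S' ∩ G'.neighborSet v').ncard + (if v ∈ S then 1 else 0) = 2 := by
  rw [hasLabel_two_iff, ncard_inter_joinAt_neighborSet_inr_self]
  simp

theorem typeISet_joinAt_and_hasLabel_two_iff :
    (TypeISet (joinAt G G' v v') (Sum.inr v') (Sum.inl '' S ∪ Sum.inr '' S') ∧
        HasLabel (joinAt G G' v v') (Sum.inr v') (Sum.inl '' S ∪ Sum.inr '' S') 2) ↔
      TypeISet G v S ∧ TypeISet G' v' S' ∧
        ((HasLabel G v S 0 ∧ HasLabel G' v' S' 1) ∨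
         (HasLabel G v S 1 ∧ HasLabel G' v' S' 2) ∨
         (HasLabel G v S 2 ∧ HasLabel G' v' S' 2)) := by
  classical
  rw [hasLabel_joinAt_two_iff]
  simp only [hasLabel_zero_iff, hasLabel_one_iff, hasLabel_two_iff]
  constructor
  · rintro ⟨hT, hv', hcount⟩
    obtain ⟨hTS, hvpos, hTS', -⟩ := (typeISet_joinAt_iff hv').1 hT
    refine ⟨hTS, hTS', ?_⟩
    by_cases hv : v ∈ S
    · rw [if_pos hv] at hcount
      exact Or.inl ⟨hv, hv', by omega⟩
    · rw [if_neg hv] at hcount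
      have hle := hTS.2.2.resolve_left hv
      rcases (by have := hvpos hv; omega : (S ∩ G.neighborSet v).ncard = 1 ∨
          (S ∩ G.neighborSet v).ncard = 2) with hn | hn
      · exact Or.inr (Or.inl ⟨⟨hv, hn⟩, hv', by omega⟩)
      · exact Or.inr (Or.inr ⟨⟨hv, hn⟩, hv', by omega⟩)
  · rintro ⟨hTS, hTS', hpair⟩
    obtain ⟨hv', hcount, hvpos⟩ : v' ∉ S' ∧
        (S' ∩ G'.neighborSet v').ncard + (if v ∈ S then 1 else 0) = 2 ∧
        (v ∉ S → 1 ≤ (S ∩ G.neighborSet v).ncard) := by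
      rcases hpair with ⟨hv, hv', hn'⟩ | ⟨⟨hv, hn⟩, hv', hn'⟩ | ⟨⟨hv, hn⟩, hv', hn'⟩
      all_goals simp [*]
    exact ⟨(typeISet_joinAt_iff hv').2 ⟨hTS, hvpos, hTS', hcount.le⟩, hv', hcount⟩

end JoinAtTypeI

theorem statement19_general {V W : Type*} [Fintype V] [Fintype W]
    (G : SimpleGraph V) (G' : SimpleGraph W) (v : V) (v' : W) :
    (∀ S'' : Set (V ⊕ W),
      (TypeISet (joinAt G G' v v') (Sum.inr v') S'' ∧
          HasLabel (joinAt G G' v v') (Sum.inr v') S'' 2) ↔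
        ∃ (S : Set V) (S' : Set W), S = Sum.inl ⁻¹' S'' ∧ S' = Sum.inr ⁻¹' S'' ∧
          S'' = Sum.inl '' S ∪ Sum.inr '' S' ∧ TypeISet G v S ∧ TypeISet G' v' S' ∧
          ((HasLabel G v S 0 ∧ HasLabel G' v' S' 1) ∨
           (HasLabel G v S 1 ∧ HasLabel G' v' S' 2) ∨
           (HasLabel G v S 2 ∧ HasLabel G' v' S' 2))) ∧
    (∀ (R : Set V) (S' : Set W), TypeISet G v R → HasLabel G v R (-1) →
      TypeISet G' v' S' → HasLabel G' v' S' 1 →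
      TypeISet (joinAt G G' v v') (Sum.inr v')
          (Sum.inl '' (R ∪ {v}) ∪ Sum.inr '' S') ∧
        HasLabel (joinAt G G' v v') (Sum.inr v')
          (Sum.inl '' (R ∪ {v}) ∪ Sum.inr '' S') 2) := by
  refine ⟨fun S'' => ⟨fun h => ?_, ?_⟩, fun R S' hR hRl hS' hS'l => ?_⟩
  · have hS'' : S'' = Sum.inl '' (Sum.inl ⁻¹' S'') ∪ Sum.inr '' (Sum.inr ⁻¹' S'') := by
      ext (x | x) <;> simp
    rw [hS''] at h
    exact ⟨_, _, rfl, rfl, hS'', typeISet_joinAt_and_hasLabel_two_iff.1 h⟩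
  · rintro ⟨S, S', -, -, rfl, h⟩
    exact typeISet_joinAt_and_hasLabel_two_iff.2 h
  · exact typeISet_joinAt_and_hasLabel_two_iff.2
      ⟨hR.union_singleton_of_hasLabel_neg_one hRl, hS',
        Or.inl ⟨hasLabel_zero_iff.2 (Set.mem_union_right R rfl), hS'l⟩⟩

theorem statement19 {V W : Type*} [Fintype V] [Fintype W] [Nontrivial V]
    [Nontrivial W] (G : SimpleGraph V) (G' : SimpleGraph W) (v : V) (v' : W) :
    (∀ S'' : Set (V ⊕ W),
      (TypeISet (joinAt G G' v v') (Sum.inr v') S'' ∧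
          HasLabel (joinAt G G' v v') (Sum.inr v') S'' 2) ↔
        ∃ (S : Set V) (S' : Set W), S = Sum.inl ⁻¹' S'' ∧ S' = Sum.inr ⁻¹' S'' ∧
          S'' = Sum.inl '' S ∪ Sum.inr '' S' ∧ TypeISet G v S ∧ TypeISet G' v' S' ∧
          ((HasLabel G v S 0 ∧ HasLabel G' v' S' 1) ∨
           (HasLabel G v S 1 ∧ HasLabel G' v' S' 2) ∨
           (HasLabel G v S 2 ∧ HasLabel G' v' S' 2))) ∧
    (∀ (R : Set V) (S' : Set W), TypeISet G v R → HasLabel G v R (-1) →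
      TypeISet G' v' S' → HasLabel G' v' S' 1 →
      TypeISet (joinAt G G' v v') (Sum.inr v')
          (Sum.inl '' (R ∪ {v}) ∪ Sum.inr '' S') ∧
        HasLabel (joinAt G G' v v') (Sum.inr v')
          (Sum.inl '' (R ∪ {v}) ∪ Sum.inr '' S') 2) :=
  statement19_general G G' v v'
end
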